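/- Let X_1, …, X_n be real random variables with mean zero, uniformly bounded fourth moments (E[X_i^4] ≤ C), and suppose there is a dependency structure: for each i there is a set J_i ⊆ {1,…,n} with |J_i| ≤ m such that X_i is independent of {X_j : j ∉ J_i}. Then E[(∑_{i=1}^n X_i)^4] ≤ C' (n m^3 + n^2 m^2) for a constant C' depending only on C. -/

import Mathlib

/-!
Expanding the fourth power, `E[(∑ X_i)⁴] = ∑_p E[X_{p 0} X_{p 1} X_{p 2} X_{p 3}]` over
`p : Fin 4 → Fin n`. If some position `q` of `p` has no other entry in `J (p q)`, the factor
`X_{p q}` is independent of the other three and has mean zero, so the term vanishes; every other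
term is at most `C` by AM-GM. In a surviving tuple each position `q` points to some `φ q ≠ q`
with `p (φ q) ∈ J (p q)`. For such a fixed-point-free `φ` on four points there are `a`, `b` with
`φ a ≠ φ b` and `b ≠ φ a`: the two entries off `{φ a, φ b}` are free (`n²` choices), then
`p (φ b) ∈ J (p b)` and `p (φ a) ∈ J (p a)` leave at most `m` choices each. So at most
`4⁴ n² m²` terms survive.
-/

open MeasureTheory ProbabilityTheory Finset Function

section Moments

variable {Ω : Type*} {mΩ : MeasurableSpace Ω} {μ : Measure Ω}

lemma abs_prod_fin_four_le (x : Fin 4 → ℝ) : |∏ r, x r| ≤ (∑ r, x r ^ 4) / 4 := by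
  rw [Fin.prod_univ_four, Fin.sum_univ_four, abs_mul, abs_mul, abs_mul]
  nlinarith [sq_nonneg (|x 0| * |x 1| - |x 2| * |x 3|), sq_nonneg (x 0 ^ 2 - x 1 ^ 2),
    sq_nonneg (x 2 ^ 2 - x 3 ^ 2), sq_abs (x 0), sq_abs (x 1), sq_abs (x 2), sq_abs (x 3)]

lemma MeasureTheory.MemLp.integrable_pow_four {Y : Ω → ℝ} (hY : MemLp Y 4 μ) :
    Integrable (fun ω => Y ω ^ 4) μ := by
  simpa [Real.norm_eq_abs, Even.pow_abs (by decide : Even 4)] using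
    hY.integrable_norm_pow (p := 4) (by norm_num)

lemma integrable_prod_fin_four {Y : Fin 4 → Ω → ℝ} (hY : ∀ r, MemLp (Y r) 4 μ) :
    Integrable (fun ω => ∏ r, Y r ω) μ :=
  ((integrable_finsetSum _ fun r _ => (hY r).integrable_pow_four).div_const 4).mono'
    (Finset.aestronglyMeasurable_fun_prod _ fun r _ => (hY r).1)
    (ae_of_all _ fun ω => abs_prod_fin_four_le fun r => Y r ω)

lemma integral_prod_fin_four_le {Y : Fin 4 → Ω → ℝ} {C : ℝ} (hY : ∀ r, MemLp (Y r) 4 μ)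
    (hC : ∀ r, ∫ ω, Y r ω ^ 4 ∂μ ≤ C) :
    ∫ ω, ∏ r, Y r ω ∂μ ≤ C := by
  have hY4 : ∀ r ∈ univ, Integrable (fun ω => Y r ω ^ 4) μ :=
    fun r _ => (hY r).integrable_pow_four
  calc ∫ ω, ∏ r, Y r ω ∂μ ≤ ∫ ω, (∑ r, Y r ω ^ 4) / 4 ∂μ :=
        integral_mono (integrable_prod_fin_four hY) ((integrable_finsetSum _ hY4).div_const 4)
          fun ω => (le_abs_self _).trans (abs_prod_fin_four_le fun r => Y r ω)
    _ = (∑ r, ∫ ω, Y r ω ^ 4 ∂μ) / 4 := by rw [integral_div, integral_finsetSum _ hY4]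
    _ ≤ C := by rw [Fin.sum_univ_four]; linarith [hC 0, hC 1, hC 2, hC 3]

lemma integral_sum_pow_four {ι : Type*} [Fintype ι] {X : ι → Ω → ℝ}
    (hX : ∀ i, MemLp (X i) 4 μ) :
    ∫ ω, (∑ i, X i ω) ^ 4 ∂μ = ∑ p : Fin 4 → ι, ∫ ω, ∏ r, X (p r) ω ∂μ := by
  simp_rw [Fintype.sum_pow]
  exact integral_finsetSum _ fun p _ => integrable_prod_fin_four fun r => hX (p r)

lemma integral_mul_eq_zero_of_indep {m : MeasurableSpace Ω} {Y W : Ω → ℝ}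
    (hind : Indep (MeasurableSpace.comap Y inferInstance) m μ) (hW : Measurable[m] W)
    (hYm : AEStronglyMeasurable[mΩ] Y μ) (hWm : AEStronglyMeasurable[mΩ] W μ)
    (hmean : ∫ ω, Y ω ∂μ = 0) :
    ∫ ω, Y ω * W ω ∂μ = 0 := by
  have hYW : IndepFun Y W μ :=
    (IndepFun_iff_Indep Y W μ).2 (indep_of_indep_of_le_right hind hW.comap_le)
  rw [hYW.integral_fun_mul_eq_mul_integral hYm hWm, hmean, zero_mul]

lemma integral_prod_eq_zero_of_forall_notMem {ι κ : Type*} [Fintype ι] [DecidableEq ι]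
    [Fintype κ] [DecidableEq κ] {X : ι → Ω → ℝ} {J : ι → Finset ι}
    (hX : ∀ i, AEStronglyMeasurable (X i) μ) (hmean : ∀ i, ∫ ω, X i ω ∂μ = 0)
    (hindep : ∀ i, Indep (MeasurableSpace.comap (X i) inferInstance)
      (⨆ j ∈ (J i)ᶜ, MeasurableSpace.comap (X j) inferInstance) μ)
    (p : κ → ι) {q : κ} (hq : ∀ r ≠ q, p r ∉ J (p q)) :
    ∫ ω, ∏ r, X (p r) ω ∂μ = 0 := by
  simp_rw [← mul_prod_erase univ (fun r => X (p r) _) (mem_univ q)]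
  refine integral_mul_eq_zero_of_indep (hindep (p q)) ?_ (hX _)
    (Finset.aestronglyMeasurable_fun_prod _ fun r _ => hX _) (hmean _)
  refine Finset.measurable_fun_prod _ fun r hr => Measurable.of_comap_le ?_
  exact le_iSup₂ (f := fun j (_ : j ∈ (J (p q))ᶜ) => MeasurableSpace.comap (X j) _)
    (p r) (mem_compl.2 (hq r (ne_of_mem_erase hr)))

end Moments

section Counting

variable {ι α : Type*} [DecidableEq ι] [Fintype ι] [DecidableEq α]

lemma card_filter_mem_le_mul_card_image_update (T : Finset (ι → α)) {i : ι} (x₀ : α)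
    {K : (ι → α) → Finset α} {m : ℕ} (hK : ∀ p x, K (update p i x) = K p)
    (hm : ∀ p, #(K p) ≤ m) :
    #{p ∈ T | p i ∈ K p} ≤ m * #(T.image (update · i x₀)) := by
  refine (card_le_mul_card_image _ m fun q _ => ?_).trans
    (Nat.mul_le_mul_left _ (card_le_card (image_subset_image (filter_subset _ _))))
  have hq : ∀ p, update p i x₀ = q → p = update q i (p i) := fun p hp => by
    rw [← hp, update_idem, update_eq_self]
  refine (card_le_card_of_injOn (· i) (fun p hp => ?_) fun p hp p' hp' h => ?_).trans (hm q)
  · simp only [mem_coe, mem_filter] at hp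
    rw [← hp.2, hK]
    exact hp.1.2
  · simp only [mem_coe, mem_filter] at hp hp'
    rw [hq p hp.2, hq p' hp'.2]
    exact congrArg (update q i) h

variable [Fintype α]

lemma card_image_update_update_le {c d : ι} (hcd : c ≠ d) (x₀ : α) :
    #((univ : Finset (ι → α)).image fun p => update (update p c x₀) d x₀) ≤
      Fintype.card α ^ (Fintype.card ι - 2) := by
  have hsub : ((univ : Finset (ι → α)).image fun p => update (update p c x₀) d x₀) ⊆
      Fintype.piFinset fun k => if k ∈ ({c, d} : Finset ι) then {x₀} else univ := by
    simp only [subset_iff, mem_image, mem_univ, true_and, Fintype.mem_piFinset]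
    rintro _ ⟨p, rfl⟩ k
    split_ifs with hk
    · rcases mem_insert.1 hk with rfl | hk
      · simp [update_of_ne hcd]
      · simp [mem_singleton.1 hk]
    · exact mem_univ _
  refine (card_le_card hsub).trans_eq ?_
  rw [Fintype.card_piFinset]
  simp only [apply_ite card, card_singleton, card_univ]
  rw [prod_ite, prod_const_one, one_mul, prod_const, filter_not, filter_mem_eq_inter,
    univ_inter, ← compl_eq_univ_sdiff, card_compl, card_pair hcd]

lemma card_filter_mem_and_mem_le (J : α → Finset α) {m : ℕ} (hJ : ∀ x, #(J x) ≤ m)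
    {a b c d : ι} (hcd : c ≠ d) (hac : a ≠ c) (hbc : b ≠ c) (hbd : b ≠ d) :
    #{p : ι → α | p c ∈ J (p a) ∧ p d ∈ J (p b)} ≤
      m ^ 2 * Fintype.card α ^ (Fintype.card ι - 2) := by
  rcases isEmpty_or_nonempty α with hα | ⟨⟨x₀⟩⟩
  · have : IsEmpty (ι → α) := ⟨fun p => hα.false (p c)⟩
    simp
  set D : Finset (ι → α) := {p | p d ∈ J (p b)}
  calc #{p : ι → α | p c ∈ J (p a) ∧ p d ∈ J (p b)}
      = #{p ∈ D | p c ∈ J (p a)} := by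
        rw [filter_filter]; simp only [and_comm]
    _ ≤ m * #(D.image (update · c x₀)) :=
        card_filter_mem_le_mul_card_image_update _ x₀
          (fun p x => by rw [update_of_ne hac]) fun _ => hJ _
    _ = m * #{p ∈ (univ : Finset (ι → α)).image (update · c x₀) | p d ∈ J (p b)} := by
        rw [filter_image]
        simp only [D, update_of_ne hbc, update_of_ne hcd.symm]
    _ ≤ m * (m * #(((univ : Finset (ι → α)).image (update · c x₀)).image
          (update · d x₀))) :=
        Nat.mul_le_mul_left _ (card_filter_mem_le_mul_card_image_update _ x₀
          (fun p x => by rw [update_of_ne hbd]) fun _ => hJ _)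
    _ ≤ m * (m * Fintype.card α ^ (Fintype.card ι - 2)) := by
        rw [image_image]
        exact Nat.mul_le_mul_left _
          (Nat.mul_le_mul_left _ (card_image_update_update_le hcd x₀))
    _ = _ := by ring

set_option maxRecDepth 10000 in
lemma exists_apply_ne_apply_and_ne (φ : Fin 4 → Fin 4) (hφ : ∀ q, φ q ≠ q) :
    ∃ a b, φ a ≠ φ b ∧ b ≠ φ a := by
  revert φ; decide

lemma card_filter_forall_exists_ne_mem_le (J : α → Finset α) {m : ℕ}
    (hJ : ∀ x, #(J x) ≤ m) :
    #{p : Fin 4 → α | ∀ q, ∃ r ≠ q, p r ∈ J (p q)} ≤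
      4 ^ 4 * (m ^ 2 * Fintype.card α ^ 2) := by
  let V : Finset (Fin 4 × Fin 4 × Fin 4 × Fin 4) :=
    {t | t.2.2.1 ≠ t.2.2.2 ∧ t.1 ≠ t.2.2.1 ∧ t.2.1 ≠ t.2.2.1 ∧ t.2.1 ≠ t.2.2.2}
  let S (t : Fin 4 × Fin 4 × Fin 4 × Fin 4) : Finset (Fin 4 → α) :=
    {p | p t.2.2.1 ∈ J (p t.1) ∧ p t.2.2.2 ∈ J (p t.2.1)}
  have hsub :
      ({p | ∀ q, ∃ r ≠ q, p r ∈ J (p q)} : Finset (Fin 4 → α)) ⊆ V.biUnion S := by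
    intro p hp
    simp only [mem_filter, mem_univ, true_and] at hp
    choose φ hφ hpφ using hp
    obtain ⟨a, b, hab, hba⟩ := exists_apply_ne_apply_and_ne φ hφ
    simp only [mem_biUnion, V, S, mem_filter, mem_univ, true_and]
    exact ⟨(a, b, φ a, φ b), ⟨hab, (hφ a).symm, hba, (hφ b).symm⟩, hpφ a, hpφ b⟩
  calc #{p : Fin 4 → α | ∀ q, ∃ r ≠ q, p r ∈ J (p q)}
      ≤ ∑ t ∈ V, #(S t) := (card_le_card hsub).trans card_biUnion_le
    _ ≤ ∑ _t ∈ V, m ^ 2 * Fintype.card α ^ 2 := sum_le_sum fun t ht => by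
        simp only [V, mem_filter, mem_univ, true_and] at ht
        simpa using card_filter_mem_and_mem_le J hJ ht.1 ht.2.1 ht.2.2.1 ht.2.2.2
    _ ≤ 4 ^ 4 * (m ^ 2 * Fintype.card α ^ 2) := by
        rw [sum_const, smul_eq_mul]
        exact Nat.mul_le_mul_right _ ((card_filter_le _ _).trans (by simp))

end Counting

theorem fourth_moment_sum_m_dependent_general
    (C : ℝ) :
    ∃ C' : ℝ, 0 < C' ∧
      ∀ (n m : ℕ) (Ω : Type) (_ : MeasureSpace Ω)
        (_ : IsProbabilityMeasure (ℙ : Measure Ω))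
        (X : Fin n → Ω → ℝ) (J : Fin n → Finset (Fin n)),
        (∀ i, Measurable (X i)) →
        (∀ i, MemLp (X i) 4 ℙ) →
        (∀ i, ∫ ω, X i ω ∂ℙ = 0) →
        (∀ i, ∫ ω, (X i ω) ^ 4 ∂ℙ ≤ C) →
        (∀ i, i ∈ J i) →
        (∀ i, (J i).card ≤ m) →
        (∀ i, Indep (MeasurableSpace.comap (X i) inferInstance)
            (⨆ j ∈ (J i)ᶜ, MeasurableSpace.comap (X j) inferInstance) ℙ) →
        ∫ ω, (∑ i, X i ω) ^ 4 ∂ℙ ≤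
          C' * ((n : ℝ) * (m : ℝ) ^ 3 + (n : ℝ) ^ 2 * (m : ℝ) ^ 2) := by
  refine ⟨4 ^ 4 * max C 0 + 1, by positivity, ?_⟩
  intro n m Ω _ _ X J _ hX hmean hC _ hJ hindep
  let D : Finset (Fin 4 → Fin n) := {p | ∀ q, ∃ r ≠ q, p r ∈ J (p q)}
  have hD : (#D : ℝ) ≤ 4 ^ 4 * ((m : ℝ) ^ 2 * (n : ℝ) ^ 2) := by
    exact_mod_cast (card_filter_forall_exists_ne_mem_le J hJ).trans_eq (by simp)
  have hsupp : ∀ p ∉ D, ∫ ω, ∏ r, X (p r) ω = 0 := fun p hp => by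
    simp only [D, mem_filter, mem_univ, true_and, not_forall, not_exists, not_and] at hp
    obtain ⟨q, hq⟩ := hp
    exact integral_prod_eq_zero_of_forall_notMem (fun i => (hX i).1) hmean hindep p hq
  calc ∫ ω, (∑ i, X i ω) ^ 4
      = ∑ p ∈ D, ∫ ω, ∏ r, X (p r) ω := by
        rw [integral_sum_pow_four hX, sum_subset (subset_univ D) fun p _ hp => hsupp p hp]
    _ ≤ #D * max C 0 := by
        rw [← nsmul_eq_mul, ← sum_const]
        exact sum_le_sum fun p _ =>
          (integral_prod_fin_four_le (fun r => hX (p r)) fun r => hC (p r)).trans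
            (le_max_left _ _)
    _ ≤ 4 ^ 4 * ((m : ℝ) ^ 2 * (n : ℝ) ^ 2) * max C 0 := by gcongr
    _ ≤ (4 ^ 4 * max C 0 + 1) * ((n : ℝ) * (m : ℝ) ^ 3 + (n : ℝ) ^ 2 * (m : ℝ) ^ 2) := by
        have hM : 0 ≤ max C 0 := le_max_right C 0
        have hnm : 0 ≤ (n : ℝ) * (m : ℝ) ^ 3 := by positivity
        nlinarith [mul_nonneg hM hnm, sq_nonneg ((n : ℝ) * m)]

/-- fourth-moment bound for sums of mean-zero variables with an
m-dependency-neighborhood structure: E[(∑ X_i)⁴] ≤ C'(n m³ + n² m²), with C'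
depending only on C. -/
theorem fourth_moment_sum_m_dependent
    (C : ℝ) (hC : 0 ≤ C) :
    ∃ C' : ℝ, 0 < C' ∧
      ∀ (n m : ℕ) (Ω : Type) (_ : MeasureSpace Ω)
        (_ : IsProbabilityMeasure (ℙ : Measure Ω))
        (X : Fin n → Ω → ℝ) (J : Fin n → Finset (Fin n)),
        (∀ i, Measurable (X i)) →
        (∀ i, MemLp (X i) 4 ℙ) →
        (∀ i, ∫ ω, X i ω ∂ℙ = 0) →
        (∀ i, ∫ ω, (X i ω) ^ 4 ∂ℙ ≤ C) →
        (∀ i, i ∈ J i) →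
        (∀ i, (J i).card ≤ m) →
        (∀ i, Indep (MeasurableSpace.comap (X i) inferInstance)
            (⨆ j ∈ (J i)ᶜ, MeasurableSpace.comap (X j) inferInstance) ℙ) →
        ∫ ω, (∑ i, X i ω) ^ 4 ∂ℙ ≤
          C' * ((n : ℝ) * (m : ℝ) ^ 3 + (n : ℝ) ^ 2 * (m : ℝ) ^ 2) :=
  fourth_moment_sum_m_dependent_general C
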